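/- Define q_{a,b}(n,k)=w_{a,b}(n-k,k) for n≥k and 0 otherwise, where w_{a,b}(n,m)=Σ_{j} binom(n,j)binom(m,j)a^{n+m-2j}b^j. Then Q_{a,b}=[q_{a,b}(n,k)] is the Riordan array (1/(1-az), az+bz^2/(1-az)); i.e., for all n,k≥0, q_{a,b}(n,k)=[z^n] (1/(1-az))·(az+bz^2/(1-az))^k. -/

import Mathlib

open PowerSeries

/-- The weighted Delannoy numbers `w_{a,b}(n,m)`. -/
def wab {K : Type*} [Field K] (a b : K) (n m : ℕ) : K :=
  ∑ k ∈ Finset.range (min n m + 1),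
    (n.choose k : K) * (m.choose k : K) * a ^ (n + m - 2 * k) * b ^ k

/-- The palindromic `(a,b)`-Delannoy matrix. -/
def qab {K : Type*} [Field K] (a b : K) (n k : ℕ) : K :=
  if k ≤ n then wab a b (n - k) k else 0

section Aux

variable {K : Type*} [Field K] (a b : K)

lemma wab_zero_left (m : ℕ) : wab a b 0 m = a ^ m := by
  simp [wab]

lemma wab_zero_right (n : ℕ) : wab a b n 0 = a ^ n := by
  simp [wab]

/-- normalized form of `wab`, with an extended summation range. -/
lemma wab_norm (ha : a ≠ 0) (n m N : ℕ) (hN : min n m + 1 ≤ N) :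
    wab a b n m = a ^ (n + m) *
      ∑ j ∈ Finset.range N, (n.choose j : K) * (m.choose j : K) * (b / a ^ 2) ^ j := by
  have hterm : ∀ j : ℕ,
      (n.choose j : K) * (m.choose j : K) * a ^ (n + m - 2 * j) * b ^ j
        = a ^ (n + m) * ((n.choose j : K) * (m.choose j : K) * (b / a ^ 2) ^ j) := by
    intro j
    rcases le_or_gt j n with hjn | hjn
    · rcases le_or_gt j m with hjm | hjm
      · have h2j : 2 * j ≤ n + m := by omega
        have hpow : a ^ (n + m) = a ^ (n + m - 2 * j) * a ^ (2 * j) := by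
          rw [← pow_add]; congr 1; omega
        rw [hpow, div_pow, ← pow_mul]
        field_simp
      · rw [Nat.choose_eq_zero_of_lt hjm]
        push_cast; ring
    · rw [Nat.choose_eq_zero_of_lt hjn]
      push_cast; ring
  rw [wab, Finset.mul_sum]
  rw [Finset.sum_subset (Finset.range_subset_range.2 hN)]
  · exact Finset.sum_congr rfl fun j _ => hterm j
  · intro j _ hj
    simp only [Finset.mem_range, Nat.lt_succ_iff, not_le] at hj
    rcases Nat.lt_or_ge n m with h | h
    · rw [Nat.choose_eq_zero_of_lt (by omega : n < j)]
      push_cast; ring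
    · rw [Nat.choose_eq_zero_of_lt (by omega : m < j)]
      push_cast; ring

/-- The key binomial-sum recurrence. -/
lemma choose_sum_rec (c : K) (m k : ℕ) :
    ∑ j ∈ Finset.range (m + k + 2), ((m+1).choose j : K) * ((k+1).choose j : K) * c ^ j
      = (∑ j ∈ Finset.range (m + k + 2), (m.choose j : K) * ((k+1).choose j : K) * c ^ j)
      + (∑ j ∈ Finset.range (m + k + 2), ((m+1).choose j : K) * (k.choose j : K) * c ^ j)
      + (c - 1) * ∑ j ∈ Finset.range (m + k + 2), (m.choose j : K) * (k.choose j : K) * c ^ j := by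
  have key2 :
      (∑ j ∈ Finset.range (m + k + 2),
        (((m+1).choose j : K) - (m.choose j : K)) * (((k+1).choose j : K) - (k.choose j : K)) * c ^ j)
        = c * ∑ j ∈ Finset.range (m + k + 2), (m.choose j : K) * (k.choose j : K) * c ^ j := by
    have hlast : (m.choose (m + k + 1) : K) = 0 := by
      rw [Nat.choose_eq_zero_of_lt (by omega)]; push_cast; ring
    rw [show m + k + 2 = (m + k + 1) + 1 from rfl, Finset.sum_range_succ' _ (m + k + 1),
        Finset.sum_range_succ (fun j => (m.choose j : K) * (k.choose j : K) * c ^ j) (m + k + 1),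
        hlast]
    have hstep : ∀ j : ℕ,
        (((m+1).choose (j+1) : K) - (m.choose (j+1) : K))
            * (((k+1).choose (j+1) : K) - (k.choose (j+1) : K)) * c ^ (j+1)
          = (m.choose j : K) * (k.choose j : K) * c ^ (j + 1) := by
      intro j
      rw [Nat.choose_succ_succ' m j, Nat.choose_succ_succ' k j]
      push_cast; ring
    rw [Finset.sum_congr rfl fun j _ => hstep j]
    simp only [Nat.choose_zero_right, Nat.cast_one, sub_self, zero_mul, mul_zero, add_zero,
      zero_add, pow_zero, mul_one]
    rw [Finset.mul_sum]
    exact Finset.sum_congr rfl fun j _ => by ring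
  have e1 :
      (∑ j ∈ Finset.range (m + k + 2), ((m+1).choose j : K) * ((k+1).choose j : K) * c ^ j)
      - (∑ j ∈ Finset.range (m + k + 2), (m.choose j : K) * ((k+1).choose j : K) * c ^ j)
      - (∑ j ∈ Finset.range (m + k + 2), ((m+1).choose j : K) * (k.choose j : K) * c ^ j)
      + (∑ j ∈ Finset.range (m + k + 2), (m.choose j : K) * (k.choose j : K) * c ^ j)
      = ∑ j ∈ Finset.range (m + k + 2),
          (((m+1).choose j : K) - (m.choose j : K)) * (((k+1).choose j : K) - (k.choose j : K)) * c ^ j := by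
    rw [← Finset.sum_sub_distrib, ← Finset.sum_sub_distrib, ← Finset.sum_add_distrib]
    exact Finset.sum_congr rfl fun j _ => by ring
  linear_combination e1 + key2

/-- The weighted-Delannoy recurrence. -/
lemma wab_rec (ha : a ≠ 0) (m k : ℕ) :
    wab a b (m+1) (k+1)
      = a * wab a b m (k+1) + a * wab a b (m+1) k + (b - a^2) * wab a b m k := by
  rw [wab_norm a b ha (m+1) (k+1) (m+k+2) (by omega),
      wab_norm a b ha m (k+1) (m+k+2) (by omega),
      wab_norm a b ha (m+1) k (m+k+2) (by omega),
      wab_norm a b ha m k (m+k+2) (by omega)]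
  have key := choose_sum_rec (K := K) (b / a ^ 2) m k
  have hb : b - a ^ 2 = a ^ 2 * (b / a ^ 2 - 1) := by
    field_simp
  rw [hb]
  linear_combination (a ^ (m + k + 2)) * key

lemma qab_rec (ha : a ≠ 0) (n k : ℕ) :
    qab a b (n+1+1) (k+1)
      = a * qab a b (n+1) (k+1) + a * qab a b (n+1) k + (b - a^2) * qab a b n k := by
  rcases le_or_gt k n with h1 | h1
  · obtain ⟨m, rfl⟩ : ∃ m, n = k + m := ⟨n - k, by omega⟩
    have e1 : k + m + 2 - (k + 1) = m + 1 := by omega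
    have e2 : k + m + 1 - (k + 1) = m := by omega
    have e3 : k + m + 1 - k = m + 1 := by omega
    have e4 : k + m - k = m := by omega
    simp only [qab, if_pos (by omega : k + 1 ≤ k + m + 2), if_pos (by omega : k + 1 ≤ k + m + 1),
      if_pos (by omega : k ≤ k + m + 1), if_pos (by omega : k ≤ k + m), e1, e2, e3, e4]
    exact wab_rec a b ha m k
  · rcases eq_or_lt_of_le (by omega : n + 1 ≤ k) with h2 | h2
    · subst h2
      simp only [qab, if_pos (le_refl (n + 2)), if_neg (by omega : ¬ n + 2 ≤ n + 1),
        if_pos (le_refl (n + 1)), if_neg (by omega : ¬ n + 1 ≤ n), Nat.sub_self,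
        wab_zero_left]
      ring
    · simp only [qab, if_neg (by omega : ¬ k + 1 ≤ n + 2), if_neg (by omega : ¬ k + 1 ≤ n + 1),
        if_neg (by omega : ¬ k ≤ n + 1), if_neg (by omega : ¬ k ≤ n)]
      ring

lemma hF_mul : (1 - C a * X) * (1 - C a * X)⁻¹ = 1 :=
  PowerSeries.mul_inv_cancel _ (by simp)

lemma coeff_F (n : ℕ) : coeff n (1 - C a * X)⁻¹ = a ^ n := by
  have h1 : (1 - C a * X)⁻¹ = 1 + C a * X * (1 - C a * X)⁻¹ := by
    linear_combination hF_mul a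
  induction n with
  | zero =>
    rw [h1, map_add, mul_assoc, coeff_C_mul]
    simp [coeff_zero_eq_constantCoeff, map_mul]
  | succ n ih =>
    rw [h1, map_add, mul_assoc, coeff_C_mul, coeff_succ_X_mul, ih]
    simp [coeff_one, pow_succ, mul_comm]

lemma step (k : ℕ) :
    (1 - C a * X) * ((1 - C a * X)⁻¹ * (C a * X + C b * X ^ 2 * (1 - C a * X)⁻¹) ^ (k+1))
      = (C a * X + (C b - C a ^ 2) * X ^ 2)
        * ((1 - C a * X)⁻¹ * (C a * X + C b * X ^ 2 * (1 - C a * X)⁻¹) ^ k) := by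
  have hF := hF_mul (K := K) a
  have hh : C a * X + C b * X ^ 2 * (1 - C a * X)⁻¹
      = (C a * X + (C b - C a ^ 2) * X ^ 2) * (1 - C a * X)⁻¹ := by
    linear_combination (-(C a * X)) * hF
  rw [hh]
  linear_combination ((C a * X + (C b - C a ^ 2) * X ^ 2) * (1 - C a * X)⁻¹
    * ((C a * X + (C b - C a ^ 2) * X ^ 2) * (1 - C a * X)⁻¹) ^ k) * hF

lemma coeff_zero_col (k : ℕ) :
    coeff 0 ((1 - C a * X)⁻¹ * (C a * X + C b * X ^ 2 * (1 - C a * X)⁻¹) ^ k)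
      = if k = 0 then 1 else 0 := by
  have h0 : constantCoeff (C a * X + C b * X ^ 2 * (1 - C a * X)⁻¹) = 0 := by
    simp [map_add, map_mul]
  have hc : constantCoeff (1 - C a * X)⁻¹ = 1 := by
    have h := coeff_F (K := K) a 0
    rwa [pow_zero, coeff_zero_eq_constantCoeff] at h
  rw [coeff_zero_eq_constantCoeff, map_mul, map_pow, h0, hc, one_mul, zero_pow_eq]

lemma coeff_shift1 (G : K⟦X⟧) (n : ℕ) :
    coeff (n+1) (C a * X * G) = a * coeff n G := by
  rw [mul_assoc, coeff_C_mul, coeff_succ_X_mul]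

lemma coeff_shift2 (r : K) (G : K⟦X⟧) (n : ℕ) :
    coeff (n+1+1) ((C b - C r ^ 2) * X ^ 2 * G) = (b - r ^ 2) * coeff n G := by
  have h1 : (C b - C r ^ 2) * X ^ 2 * G = X * (X * (C (b - r ^ 2) * G)) := by
    rw [map_sub, map_pow]; ring
  rw [h1, coeff_succ_X_mul, coeff_succ_X_mul, coeff_C_mul]

end Aux

/-- `Q_{a,b}` is the Riordan array `(1/(1-az), az + bz²/(1-az))`:
`q_{a,b}(n,k) = [zⁿ] (1/(1-az))·(az + bz²/(1-az))ᵏ`. -/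
theorem qab_riordan {K : Type*} [Field K] (a b : K) (ha : a ≠ 0) (n k : ℕ) :
    qab a b n k
      = coeff n ((1 - C a * X)⁻¹
          * (C a * X + C b * X ^ 2 * (1 - C a * X)⁻¹) ^ k) := by
  induction k generalizing n with
  | zero =>
    rw [pow_zero, mul_one, coeff_F a n]
    simp [qab, wab]
  | succ k ih =>
    induction n with
    | zero =>
      rw [coeff_zero_col]
      simp [qab]
    | succ n ihn =>
      have hstep := congrArg (coeff (n + 1)) (step a b (K := K) k)
      rw [sub_mul, one_mul, map_sub, add_mul, map_add] at hstep
      cases n with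
      | zero =>
        -- coefficient 1
        have h2 : coeff (0+1) ((C b - C a ^ 2) * X ^ 2
            * ((1 - C a * X)⁻¹ * (C a * X + C b * X ^ 2 * (1 - C a * X)⁻¹) ^ k)) = 0 := by
          have e : (C b - C a ^ 2) * X ^ 2
              * ((1 - C a * X)⁻¹ * (C a * X + C b * X ^ 2 * (1 - C a * X)⁻¹) ^ k)
              = X * (X * ((C b - C a ^ 2)
                * ((1 - C a * X)⁻¹ * (C a * X + C b * X ^ 2 * (1 - C a * X)⁻¹) ^ k))) := by
            ring
          rw [e, coeff_succ_X_mul, coeff_zero_eq_constantCoeff, map_mul, constantCoeff_X,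
            zero_mul]
        rw [coeff_shift1 a, coeff_shift1 a, h2, add_zero, coeff_zero_col, coeff_zero_col,
          if_neg (Nat.succ_ne_zero k), mul_zero, sub_zero] at hstep
        rw [hstep]
        rcases Nat.eq_zero_or_pos k with hk | hk
        · subst hk
          simp [qab, wab]
        · rw [if_neg (by omega), mul_zero]
          simp only [qab, if_neg (by omega : ¬ k + 1 ≤ 0 + 1)]
      | succ m =>
        -- coefficient m + 2
        rw [coeff_shift1 a, coeff_shift1 a, coeff_shift2 b a] at hstep
        calc qab a b (m+1+1) (k+1)
            = a * qab a b (m+1) (k+1) + a * qab a b (m+1) k + (b - a^2) * qab a b m k :=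
              qab_rec a b ha m k
          _ = a * coeff (m+1) ((1 - C a * X)⁻¹
                * (C a * X + C b * X ^ 2 * (1 - C a * X)⁻¹) ^ (k+1))
              + a * coeff (m+1) ((1 - C a * X)⁻¹
                * (C a * X + C b * X ^ 2 * (1 - C a * X)⁻¹) ^ k)
              + (b - a^2) * coeff m ((1 - C a * X)⁻¹
                * (C a * X + C b * X ^ 2 * (1 - C a * X)⁻¹) ^ k) := by
              rw [ihn, ih (m+1), ih m]
          _ = coeff (m+1+1) ((1 - C a * X)⁻¹
                * (C a * X + C b * X ^ 2 * (1 - C a * X)⁻¹) ^ (k+1)) := by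
              linear_combination -hstep
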